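/- Permanence of elimination by put-back sets: suppose Î ∈ AS(omit(Π,A)) is a spurious answer set and PB ⊆ A is a put-back set for Î. Then for every A' ⊆ A\PB and every answer set Î' ∈ AS(omit(Π, A\(PB ∪ A'))) it holds that Î'|_Ā ≠ Î, where Ā = 𝒜\A; i.e., once the spurious answer set is eliminated by putting back PB, adding back further omitted atoms never reintroduces it. -/
import Mathlib


universe u

namespace ASP

/-- The head of a rule: falsity `⊥` (a constraint), a plain atom head,
or a choice head `{a}` (the common syntactic extension). -/
inductive Head (α : Type u) : Type u where
  | bot : Head α
  | atom : α → Head α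
  | choice : α → Head α

/-- A (ground) rule with a head, a positive body `B⁺` and a
(default-)negated body `B⁻`. -/
structure Rule (α : Type u) : Type u where
  head : Head α
  pos : Set α
  neg : Set α

/-- A (ground, propositional) program is a set of rules. -/
abbrev Program (α : Type u) : Type u := Set (Rule α)

def Head.atoms {α : Type u} : Head α → Set α
  | .bot => ∅
  | .atom a => {a}
  | .choice a => {a}

/-- `B±(r) = B⁺(r) ∪ B⁻(r)`. -/
def Rule.bodyAtoms {α : Type u} (r : Rule α) : Set α :=
  r.pos ∪ r.neg

def Rule.atoms {α : Type u} (r : Rule α) : Set α :=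
  r.head.atoms ∪ r.bodyAtoms

/-- The program `P` uses only atoms from `𝒜`. -/
def ProgramOver {α : Type u} (P : Program α) (𝒜 : Set α) : Prop :=
  ∀ r ∈ P, r.atoms ⊆ 𝒜

/-- A normal program: every head is an atom or `⊥` (no genuine choice heads). -/
def IsNormal {α : Type u} (P : Program α) : Prop :=
  ∀ r ∈ P, ∀ a : α, r.head ≠ Head.choice a

/-- `I ⊨ B(r)`, i.e. `B⁺(r) ⊆ I` and `B⁻(r) ∩ I = ∅`. -/
def bodySat {α : Type u} (I : Set α) (r : Rule α) : Prop :=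
  r.pos ⊆ I ∧ ∀ a ∈ r.neg, a ∉ I

def headSat {α : Type u} (I : Set α) : Head α → Prop
  | .bot => False
  | .atom a => a ∈ I
  | .choice _ => True

def isModel {α : Type u} (I : Set α) (P : Program α) : Prop :=
  ∀ r ∈ P, bodySat I r → headSat I r.head

/-- Satisfaction by `J` of the head of a rule of the FLP-reduct `P^I`.
A choice head `{a}` abbreviates the pair of rules `a ← B, not ā` and
`ā ← B, not a` for a fresh complement atom `ā`; projected onto the original
atoms this amounts to the condition `a ∈ I → a ∈ J`. -/
def headSatReduct {α : Type u} (I J : Set α) : Head α → Prop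
  | .bot => False
  | .atom a => a ∈ J
  | .choice a => a ∈ I → a ∈ J

/-- `J` is a model of the FLP-reduct `P^I = {r ∈ P | I ⊨ B(r)}`. -/
def satReduct {α : Type u} (J I : Set α) (P : Program α) : Prop :=
  ∀ r ∈ P, bodySat I r → bodySat J r → headSatReduct I J r.head

/-- `I` is an answer set of `P` iff `I` is a `⊆`-minimal model of the
FLP-reduct `P^I` (note that `I ⊨ P^I` iff `I ⊨ P`). -/
def isAnswerSet {α : Type u} (P : Program α) (I : Set α) : Prop :=
  isModel I P ∧ ∀ J ⊆ I, satReduct J I P → J = I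

/-- `AS(P)`, the collection of answer sets of `P`. -/
def AS {α : Type u} (P : Program α) : Set (Set α) :=
  {I | isAnswerSet P I}

/-- The head is omitted, i.e. it is an atom (or choice atom) belonging to `A`;
`⊥` is never in a set of omitted *atoms*. -/
def Head.omitted {α : Type u} (A : Set α) : Head α → Prop
  | .bot => False
  | .atom a => a ∈ A
  | .choice a => a ∈ A

def Head.toChoice {α : Type u} : Head α → Head α
  | .bot => .bot
  | .atom a => .choice a
  | .choice a => .choice a

/-- How a single rule `r` of the program is transformed into a rule `r'` of the
abstraction when the atoms in `A` are omitted: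
(a) `r` is kept unchanged if it contains no omitted atom;
(b) if the body contains an omitted atom but the head is not omitted and not `⊥`,
the body is projected to the remaining atoms and the head becomes a choice;
(c) otherwise the rule is deleted (no `r'` is produced). -/
def omitRel {α : Type u} (A : Set α) (r r' : Rule α) : Prop :=
  (r.bodyAtoms ∩ A = ∅ ∧ ¬ Head.omitted A r.head ∧ r' = r) ∨
  (r.bodyAtoms ∩ A ≠ ∅ ∧ ¬ Head.omitted A r.head ∧ r.head ≠ Head.bot ∧
    r' = ⟨Head.toChoice r.head, r.pos \ A, r.neg \ A⟩)

/-- The omission abstraction `omit(P, A)`. -/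
def omitA {α : Type u} (P : Program α) (A : Set α) : Program α :=
  {r' | ∃ r ∈ P, omitRel A r r'}


lemma toChoice_idem {α : Type u} (h : Head α) : h.toChoice.toChoice = h.toChoice := by
  cases h <;> rfl

lemma toChoice_ne_bot {α : Type u} {h : Head α} (hb : h ≠ Head.bot) :
    h.toChoice ≠ Head.bot := by
  cases h <;> simp [Head.toChoice] at *

lemma omitted_toChoice {α : Type u} {D : Set α} {h : Head α} :
    Head.omitted D h.toChoice ↔ Head.omitted D h := by
  cases h <;> simp [Head.omitted, Head.toChoice]

lemma omitted_union {α : Type u} {B D : Set α} {h : Head α} :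
    Head.omitted (B ∪ D) h ↔ Head.omitted B h ∨ Head.omitted D h := by
  cases h <;> simp [Head.omitted]

lemma bodyAtoms_mk {α : Type u} (h : Head α) (p n : Set α) (B : Set α) :
    (Rule.mk h (p \ B) (n \ B)).bodyAtoms = (Rule.mk h p n).bodyAtoms \ B := by
  simp [Rule.bodyAtoms, Set.union_diff_distrib]

lemma diff_eq_self_of_inter_empty {α : Type u} {s D : Set α} (h : s ∩ D = ∅) :
    s \ D = s := by
  ext x
  simp only [Set.mem_diff]
  exact ⟨fun hx => hx.1,
    fun hx => ⟨hx, fun hD => Set.eq_empty_iff_forall_notMem.mp h x ⟨hx, hD⟩⟩⟩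

lemma diff_union_of_inter_empty {α : Type u} {s B D : Set α} (h : s ∩ B = ∅) :
    s \ D = s \ (B ∪ D) := by
  ext x
  simp only [Set.mem_diff, Set.mem_union]
  constructor
  · rintro ⟨hx, hD⟩
    refine ⟨hx, ?_⟩
    rintro (hB | hD')
    · exact absurd (Set.eq_empty_iff_forall_notMem.mp h x) (by simp [hx, hB])
    · exact hD hD'
  · rintro ⟨hx, hBD⟩
    exact ⟨hx, fun hD => hBD (Or.inr hD)⟩

/-- Over-approximation: projecting an answer set of `Q` away from omitted
atoms `D` yields an answer set of `omit(Q, D)`. -/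
lemma overapprox {α : Type u} {Q : Program α} {D I : Set α}
    (hI : isAnswerSet Q I) : isAnswerSet (omitA Q D) (I \ D) := by
  obtain ⟨hmod, hmin⟩ := hI
  constructor
  · -- model part
    rintro r' ⟨r, hr, hrel⟩ hbs
    rcases hrel with ⟨hb, hh, hEq⟩ | ⟨hb, hh, hbot, rfl⟩
    · rw [hEq] at hbs ⊢
      have hnegD : ∀ a ∈ r.neg, a ∉ D := fun a ha hD =>
        Set.eq_empty_iff_forall_notMem.mp hb a ⟨Or.inr ha, hD⟩
      have hbI : bodySat I r :=
        ⟨fun a ha => (hbs.1 ha).1, fun a ha haI => hbs.2 a ha ⟨haI, hnegD a ha⟩⟩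
      have hhead := hmod r hr hbI
      cases hH : r.head with
      | bot => rw [hH] at hhead; exact hhead.elim
      | atom a => rw [hH] at hhead hh; exact ⟨hhead, hh⟩
      | choice a => trivial
    · -- choice head, trivially satisfied
      cases hH : r.head with
      | bot => exact absurd hH hbot
      | atom a => simp [hH, Head.toChoice, headSat]
      | choice a => simp [hH, Head.toChoice, headSat]
  · -- minimality
    intro J hJ hsat
    set K := J ∪ (I ∩ D) with hKdef
    have hKI : K ⊆ I := by
      rintro a (ha | ha)
      · exact (hJ ha).1
      · exact ha.1
    -- key: for non-omitted atom or choice heads, the abstract reduct forces J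
    have key : ∀ r ∈ Q, bodySat I r → bodySat K r →
        ∀ a : α, (r.head = Head.atom a ∨ r.head = Head.choice a) → a ∉ D →
        a ∈ I → a ∈ J := by
      intro r hr hbI hbK a hH haD haI
      have hom : ¬ Head.omitted D r.head := by
        rcases hH with hH | hH <;> rw [hH] <;> exact haD
      have hbot : r.head ≠ Head.bot := by
        rcases hH with hH | hH <;> rw [hH] <;> simp
      by_cases hb : r.bodyAtoms ∩ D = ∅
      · have hposD : ∀ x ∈ r.pos, x ∉ D := fun x hx hD =>
          Set.eq_empty_iff_forall_notMem.mp hb x ⟨Or.inl hx, hD⟩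
        have hr' : r ∈ omitA Q D := ⟨r, hr, Or.inl ⟨hb, hom, rfl⟩⟩
        have h1 : bodySat (I \ D) r :=
          ⟨fun x hx => ⟨hbI.1 hx, hposD x hx⟩,
           fun x hx h => hbI.2 x hx h.1⟩
        have h2 : bodySat J r := by
          constructor
          · intro x hx
            rcases hbK.1 hx with h | h
            · exact h
            · exact absurd h.2 (hposD x hx)
          · intro x hx hxJ
            exact hbK.2 x hx (Or.inl hxJ)
        have hred := hsat r hr' h1 h2
        rcases hH with hH | hH
        · rw [hH] at hred; exact hred
        · rw [hH] at hred; exact hred ⟨haI, haD⟩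
      · have hr' : (⟨r.head.toChoice, r.pos \ D, r.neg \ D⟩ : Rule α) ∈ omitA Q D :=
          ⟨r, hr, Or.inr ⟨hb, hom, hbot, rfl⟩⟩
        have h1 : bodySat (I \ D) ⟨r.head.toChoice, r.pos \ D, r.neg \ D⟩ := by
          constructor
          · intro x hx
            exact ⟨hbI.1 hx.1, hx.2⟩
          · intro x hx h
            exact hbI.2 x hx.1 h.1
        have h2 : bodySat J ⟨r.head.toChoice, r.pos \ D, r.neg \ D⟩ := by
          constructor
          · intro x hx
            rcases hbK.1 hx.1 with h | h
            · exact h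
            · exact absurd h.2 hx.2
          · intro x hx hxJ
            exact hbK.2 x hx.1 (Or.inl hxJ)
        have hred := hsat _ hr' h1 h2
        rcases hH with hH | hH
        · rw [hH] at hred
          exact hred ⟨haI, haD⟩
        · rw [hH] at hred
          exact hred ⟨haI, haD⟩
    have hsatK : satReduct K I Q := by
      intro r hr hbI hbK
      cases hH : r.head with
      | bot =>
        have := hmod r hr hbI
        rw [hH] at this
        exact this
      | atom a =>
        have haI : a ∈ I := by
          have := hmod r hr hbI
          rwa [hH] at this
        by_cases haD : a ∈ D
        · exact Or.inr ⟨haI, haD⟩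
        · exact Or.inl (key r hr hbI hbK a (Or.inl hH) haD haI)
      | choice a =>
        intro haI
        by_cases haD : a ∈ D
        · exact Or.inr ⟨haI, haD⟩
        · exact Or.inl (key r hr hbI hbK a (Or.inr hH) haD haI)
    have hKeq : K = I := hmin K hKI hsatK
    apply Set.Subset.antisymm hJ
    intro a ha
    have : a ∈ K := hKeq ▸ ha.1
    rcases this with h | h
    · exact h
    · exact absurd h.2 ha.2

/-- Composition of omissions. -/
lemma omit_comp {α : Type u} (P : Program α) (B D : Set α) :
    omitA (omitA P B) D = omitA P (B ∪ D) := by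
  ext r₂
  constructor
  · rintro ⟨r₁, ⟨r, hr, hrel1⟩, hrel2⟩
    refine ⟨r, hr, ?_⟩
    rcases hrel1 with ⟨hb1, hh1, rfl⟩ | ⟨hb1, hh1, hbot1, rfl⟩
    · rcases hrel2 with ⟨hb2, hh2, rfl⟩ | ⟨hb2, hh2, hbot2, rfl⟩
      · refine Or.inl ⟨?_, ?_, rfl⟩
        · rw [Set.inter_union_distrib_left, hb1, hb2, Set.union_empty]
        · rw [omitted_union]; rintro (h | h) <;> [exact hh1 h; exact hh2 h]
      · refine Or.inr ⟨?_, ?_, hbot2, ?_⟩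
        · intro h
          apply hb2
          rw [Set.eq_empty_iff_forall_notMem] at h ⊢
          intro x hx
          exact h x ⟨hx.1, Or.inr hx.2⟩
        · rw [omitted_union]; rintro (h | h) <;> [exact hh1 h; exact hh2 h]
        · have hp : r₁.pos ∩ B = ∅ := by
            rw [Set.eq_empty_iff_forall_notMem] at hb1 ⊢
            intro x hx
            exact hb1 x ⟨Or.inl hx.1, hx.2⟩
          have hn : r₁.neg ∩ B = ∅ := by
            rw [Set.eq_empty_iff_forall_notMem] at hb1 ⊢
            intro x hx
            exact hb1 x ⟨Or.inr hx.1, hx.2⟩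
          rw [← diff_union_of_inter_empty hp, ← diff_union_of_inter_empty hn]
    · rcases hrel2 with ⟨hb2, hh2, rfl⟩ | ⟨hb2, hh2, hbot2, rfl⟩
      · -- inner choice rule kept unchanged by outer omission
        rw [bodyAtoms_mk] at hb2
        refine Or.inr ⟨?_, ?_, hbot1, ?_⟩
        · intro h
          apply hb1
          rw [Set.eq_empty_iff_forall_notMem] at h ⊢
          intro x hx
          exact h x ⟨hx.1, Or.inl hx.2⟩
        · rw [omitted_union]
          rintro (h | h)
          · exact hh1 h
          · exact hh2 (omitted_toChoice.mpr h)
        · have hp : (r.pos \ B) ∩ D = ∅ := by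
            rw [Set.eq_empty_iff_forall_notMem] at hb2 ⊢
            intro x hx
            exact hb2 x ⟨⟨Or.inl hx.1.1, hx.1.2⟩, hx.2⟩
          have hn : (r.neg \ B) ∩ D = ∅ := by
            rw [Set.eq_empty_iff_forall_notMem] at hb2 ⊢
            intro x hx
            exact hb2 x ⟨⟨Or.inr hx.1.1, hx.1.2⟩, hx.2⟩
          have e1 : r.pos \ (B ∪ D) = r.pos \ B := by
            rw [← Set.diff_diff]; exact diff_eq_self_of_inter_empty hp
          have e2 : r.neg \ (B ∪ D) = r.neg \ B := by
            rw [← Set.diff_diff]; exact diff_eq_self_of_inter_empty hn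
          rw [e1, e2]
      · -- both steps transform
        refine Or.inr ⟨?_, ?_, hbot1, ?_⟩
        · intro h
          apply hb1
          rw [Set.eq_empty_iff_forall_notMem] at h ⊢
          intro x hx
          exact h x ⟨hx.1, Or.inl hx.2⟩
        · rw [omitted_union]
          rintro (h | h)
          · exact hh1 h
          · exact hh2 (omitted_toChoice.mpr h)
        · simp only [toChoice_idem, Set.diff_diff]
  · rintro ⟨r, hr, hrel⟩
    rcases hrel with ⟨hb, hh, hEq⟩ | ⟨hb, hh, hbot, rfl⟩
    · -- rule untouched by B ∪ D
      have hbB : r.bodyAtoms ∩ B = ∅ := by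
        rw [Set.eq_empty_iff_forall_notMem] at hb ⊢
        intro x hx; exact hb x ⟨hx.1, Or.inl hx.2⟩
      have hbD : r.bodyAtoms ∩ D = ∅ := by
        rw [Set.eq_empty_iff_forall_notMem] at hb ⊢
        intro x hx; exact hb x ⟨hx.1, Or.inr hx.2⟩
      rw [omitted_union] at hh
      push_neg at hh
      exact ⟨r, ⟨r, hr, Or.inl ⟨hbB, hh.1, rfl⟩⟩, Or.inl ⟨hbD, hh.2, hEq⟩⟩
    · rw [omitted_union] at hh
      push_neg at hh
      by_cases hbB : r.bodyAtoms ∩ B = ∅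
      · -- inner omission keeps r; outer transforms it
        have hbD : r.bodyAtoms ∩ D ≠ ∅ := by
          intro h
          apply hb
          rw [Set.eq_empty_iff_forall_notMem] at hbB h ⊢
          rintro x ⟨hx, (hB | hD)⟩
          · exact hbB x ⟨hx, hB⟩
          · exact h x ⟨hx, hD⟩
        have hp : r.pos ∩ B = ∅ := by
          rw [Set.eq_empty_iff_forall_notMem] at hbB ⊢
          intro x hx; exact hbB x ⟨Or.inl hx.1, hx.2⟩
        have hn : r.neg ∩ B = ∅ := by
          rw [Set.eq_empty_iff_forall_notMem] at hbB ⊢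
          intro x hx; exact hbB x ⟨Or.inr hx.1, hx.2⟩
        refine ⟨r, ⟨r, hr, Or.inl ⟨hbB, hh.1, rfl⟩⟩, Or.inr ⟨hbD, hh.2, hbot, ?_⟩⟩
        rw [← diff_union_of_inter_empty hp, ← diff_union_of_inter_empty hn]
      · -- inner omission transforms r
        set r₁ : Rule α := ⟨r.head.toChoice, r.pos \ B, r.neg \ B⟩ with hr₁
        have hmem1 : r₁ ∈ omitA P B := ⟨r, hr, Or.inr ⟨hbB, hh.1, hbot, rfl⟩⟩
        have hhD : ¬ Head.omitted D r₁.head := by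
          rw [hr₁]
          simpa [omitted_toChoice] using hh.2
        by_cases hbD : r₁.bodyAtoms ∩ D = ∅
        · refine ⟨r₁, hmem1, Or.inl ⟨hbD, hhD, ?_⟩⟩
          rw [hr₁, bodyAtoms_mk] at hbD
          have hp : (r.pos \ B) ∩ D = ∅ := by
            rw [Set.eq_empty_iff_forall_notMem] at hbD ⊢
            intro x hx
            exact hbD x ⟨⟨Or.inl hx.1.1, hx.1.2⟩, hx.2⟩
          have hn : (r.neg \ B) ∩ D = ∅ := by
            rw [Set.eq_empty_iff_forall_notMem] at hbD ⊢
            intro x hx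
            exact hbD x ⟨⟨Or.inr hx.1.1, hx.1.2⟩, hx.2⟩
          have e1 : r.pos \ (B ∪ D) = r.pos \ B := by
            rw [← Set.diff_diff]; exact diff_eq_self_of_inter_empty hp
          have e2 : r.neg \ (B ∪ D) = r.neg \ B := by
            rw [← Set.diff_diff]; exact diff_eq_self_of_inter_empty hn
          rw [hr₁, e1, e2]
        · refine ⟨r₁, hmem1, Or.inr ⟨hbD, hhD, ?_, ?_⟩⟩
          · rw [hr₁]
            exact toChoice_ne_bot hbot
          · rw [hr₁]
            simp only [toChoice_idem, Set.diff_diff]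

/-- permanence of elimination by put-back sets: suppose
`Î ∈ AS(omit(P, A))` is spurious and `PB ⊆ A` is a put-back set for `Î`
(no answer set `Ĵ` of `omit(P, A \ PB)` satisfies `Ĵ ∩ (𝒜 \ A) = Î`). Then for
every `A' ⊆ A \ PB` and every `Î' ∈ AS(omit(P, A \ (PB ∪ A')))` it holds that
`Î' ∩ (𝒜 \ A) ≠ Î`. -/
theorem putback_permanent {α : Type u} (P : Program α) (𝒜 A PB Ihat : Set α)
    (h𝒜 : 𝒜.Finite) (hnorm : IsNormal P) (hP : ProgramOver P 𝒜)
    (hA : A ⊆ 𝒜)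
    (hIhat : Ihat ∈ AS (omitA P A))
    (hspur : Ihat ∉ (fun I => I ∩ (𝒜 \ A)) '' AS P)
    (hPB : PB ⊆ A)
    (hput : ∀ J ∈ AS (omitA P (A \ PB)), J ∩ (𝒜 \ A) ≠ Ihat) :
    ∀ A' ⊆ A \ PB, ∀ Ihat' ∈ AS (omitA P (A \ (PB ∪ A'))),
      Ihat' ∩ (𝒜 \ A) ≠ Ihat := by
  intro A' hA' Ihat' hIhat' heq
  set B := A \ (PB ∪ A') with hBdef
  set C := A \ PB with hCdef
  have hBC : B ⊆ C := fun x hx => ⟨hx.1, fun h => hx.2 (Or.inl h)⟩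
  set D := C \ B with hDdef
  have hUnion : B ∪ D = C := Set.union_diff_cancel hBC
  have h2 : isAnswerSet (omitA (omitA P B) D) (Ihat' \ D) := overapprox hIhat'
  rw [omit_comp, hUnion] at h2
  apply hput (Ihat' \ D) h2
  rw [← heq]
  ext x
  simp only [Set.mem_inter_iff, Set.mem_diff]
  constructor
  · rintro ⟨⟨hx, _⟩, hxA⟩
    exact ⟨hx, hxA⟩
  · rintro ⟨hx, hxA⟩
    exact ⟨⟨hx, fun hDx => hxA.2 hDx.1.1⟩, hxA⟩

end ASP
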